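/- arXiv:1606.03599 — 4 statements merged into one kernel-verified Lean document; each statement's English description precedes it below -/
import Mathlib

section
/- Let k ∈ ℂ and y ∈ ℝ³. The function u : ℝ³ \ {y} → ℂ defined by u(x) = exp(i k ‖x−y‖)/(4π ‖x−y‖) is twice continuously differentiable on ℝ³ \ {y} and satisfies the Helmholtz equation Δu(x) + k² u(x) = 0 for every x ≠ y. -/
noncomputable section

open MeasureTheory

/-- The Euclidean norm on `ℝ³` (realized as `Fin 3 → ℝ`). -/
def enorm3 (x : Fin 3 → ℝ) : ℝ := Real.sqrt (x 0 ^ 2 + x 1 ^ 2 + x 2 ^ 2)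

/-- The Helmholtz Green's function `G_k(x,y) = exp(i k ‖x−y‖)/(4π ‖x−y‖)`. -/
def G (k : ℂ) (x y : Fin 3 → ℝ) : ℂ :=
  Complex.exp (Complex.I * k * (enorm3 (x - y) : ℂ)) /
    (4 * (Real.pi : ℂ) * (enorm3 (x - y) : ℂ))

/-- Partial derivative in the `i`-th coordinate direction. -/
def pd (i : Fin 3) (f : (Fin 3 → ℝ) → ℂ) (x : Fin 3 → ℝ) : ℂ :=
  fderiv ℝ f x (Pi.single i 1)

/-- The Laplacian `Δf = ∂₁²f + ∂₂²f + ∂₃²f`. -/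
def lap (f : (Fin 3 → ℝ) → ℂ) (x : Fin 3 → ℝ) : ℂ :=
  pd 0 (pd 0 f) x + pd 1 (pd 1 f) x + pd 2 (pd 2 f) x

/-!
Write `r = ‖x - y‖` and `g(t) = exp(i k t)/(4π)`, so that `G_k(·, y) = g(r)/r`. For a radial
function `φ(r)` on `ℝ³` one has `Δ φ(r) = φ''(r) + 2 φ'(r)/r`, which for `φ = g/r` collapses to
`Δ (g(r)/r) = g''(r)/r`. Since `g'' = -k² g`, this is `-k² G_k`.
-/

open Complex ContinuousLinearMap Filter Topology

lemma enorm3_pos {v : Fin 3 → ℝ} (hv : v ≠ 0) : 0 < enorm3 v := by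
  rw [enorm3, Real.sqrt_pos]
  obtain ⟨i, hi⟩ := Function.ne_iff.mp hv
  fin_cases i <;> simp at hi <;> positivity

lemma enorm3_eq_sqrt_sum (v : Fin 3 → ℝ) : enorm3 v = √(∑ i, v i ^ 2) := by
  rw [enorm3, Fin.sum_univ_three]

lemma sum_sq_eq_enorm3_sq (v : Fin 3 → ℝ) : ∑ i, v i ^ 2 = enorm3 v ^ 2 := by
  rw [enorm3_eq_sqrt_sum, Real.sq_sqrt (by positivity)]

lemma hasDerivAt_div_ofReal {φ : ℝ → ℂ} {φ' : ℂ} {t : ℝ} (hφ : HasDerivAt φ φ' t) (ht : t ≠ 0) :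
    HasDerivAt (fun s => φ s / s) ((φ' * t - φ t) / (t : ℂ) ^ 2) t := by
  have hid : HasDerivAt (fun s : ℝ => (s : ℂ)) 1 t := by
    simpa using (hasDerivAt_id t).ofReal_comp
  exact (hφ.fun_div hid (ofReal_ne_zero.mpr ht)).congr_deriv (by ring)

lemma hasDerivAt_cexp_mul_div (a c : ℂ) (t : ℝ) :
    HasDerivAt (fun s : ℝ => exp (a * s) / c) (a * (exp (a * t) / c)) t := by
  have hlin : HasDerivAt (fun s : ℝ => a * s) a t := by
    simpa using ((hasDerivAt_id t).ofReal_comp).const_mul a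
  exact (hlin.cexp.div_const c).congr_deriv (by ring)

lemma contDiffAt_cexp_mul_div_mul {a c : ℂ} {t : ℝ} (n : WithTop ℕ∞) (hc : c ≠ 0) (ht : t ≠ 0) :
    ContDiffAt ℝ n (fun s : ℝ => exp (a * s) / (c * s)) t := by
  have hofReal : ContDiff ℝ n (fun s : ℝ => (s : ℂ)) := ofRealCLM.contDiff
  simp only [div_eq_mul_inv]
  fun_prop (disch := simp [hc, ht])

lemma pd_eq_of_hasFDerivAt {f : (Fin 3 → ℝ) → ℂ} {f' : (Fin 3 → ℝ) →L[ℝ] ℂ} {x : Fin 3 → ℝ}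
    (hf : HasFDerivAt f f' x) (i : Fin 3) : pd i f x = f' (Pi.single i 1) := by
  rw [pd, hf.fderiv]

lemma pd_congr_of_eventuallyEq {f g : (Fin 3 → ℝ) → ℂ} {x : Fin 3 → ℝ} (h : f =ᶠ[𝓝 x] g)
    (i : Fin 3) : pd i f x = pd i g x := by
  rw [pd, pd, h.fderiv_eq]

lemma pd_mul {f g : (Fin 3 → ℝ) → ℂ} {x : Fin 3 → ℝ} (hf : DifferentiableAt ℝ f x)
    (hg : DifferentiableAt ℝ g x) (i : Fin 3) :
    pd i (fun z => f z * g z) x = pd i f x * g x + f x * pd i g x := by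
  simp only [pd, fderiv_fun_mul hf hg, add_apply, smul_apply, smul_eq_mul]
  ring

lemma pd_ofReal_apply_sub (y : Fin 3 → ℝ) (j : Fin 3) (x : Fin 3 → ℝ) :
    pd j (fun z => ((z j - y j : ℝ) : ℂ)) x = 1 := by
  rw [pd_eq_of_hasFDerivAt (f := fun z => ((z j - y j : ℝ) : ℂ))
    (ofRealCLM.hasFDerivAt.comp x ((hasFDerivAt_apply j x).sub_const (y j)))]
  simp

section Radial

variable {x y : Fin 3 → ℝ}

lemma hasFDerivAt_enorm3_sub (hx : x ≠ y) :
    HasFDerivAt (fun z => enorm3 (z - y))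
      ((enorm3 (x - y))⁻¹ • ∑ i, (x i - y i) • (proj i : (Fin 3 → ℝ) →L[ℝ] ℝ)) x := by
  have hr := enorm3_pos (sub_ne_zero.mpr hx)
  have hN : ∑ i, (x i - y i) ^ 2 = enorm3 (x - y) ^ 2 := sum_sq_eq_enorm3_sq (x - y)
  have hsq : HasFDerivAt (fun z : Fin 3 → ℝ => ∑ i, (z i - y i) ^ 2)
      (∑ i, (2 * (x i - y i)) • (proj i : (Fin 3 → ℝ) →L[ℝ] ℝ)) x :=
    HasFDerivAt.fun_sum fun i _ =>
      (((hasFDerivAt_apply i x).sub_const (y i)).pow 2).congr_fderiv (by ext v; simp)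
  have hsqrt := hsq.sqrt (by rw [hN]; positivity)
  rw [hN, Real.sqrt_sq hr.le] at hsqrt
  refine (hsqrt.congr_fderiv ?_).congr_of_eventuallyEq
    (.of_forall fun z => enorm3_eq_sqrt_sum (z - y))
  ext v
  simp only [one_div, mul_inv_rev, smul_apply, sum_apply, proj_apply, smul_eq_mul, Finset.mul_sum]
  field_simp

lemma contDiffAt_enorm3_sub (n : WithTop ℕ∞) (hx : x ≠ y) :
    ContDiffAt ℝ n (fun z => enorm3 (z - y)) x := by
  simp only [enorm3_eq_sqrt_sum]
  refine ContDiffAt.sqrt (by fun_prop) ?_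
  rw [sum_sq_eq_enorm3_sq]
  exact pow_ne_zero _ (enorm3_pos (sub_ne_zero.mpr hx)).ne'

lemma differentiableAt_radial {φ : ℝ → ℂ} (hx : x ≠ y)
    (hφ : DifferentiableAt ℝ φ (enorm3 (x - y))) :
    DifferentiableAt ℝ (fun z => φ (enorm3 (z - y))) x :=
  hφ.comp x (hasFDerivAt_enorm3_sub hx).differentiableAt

lemma pd_radial {φ : ℝ → ℂ} {φ' : ℂ} (hx : x ≠ y) (hφ : HasDerivAt φ φ' (enorm3 (x - y)))
    (j : Fin 3) :
    pd j (fun z => φ (enorm3 (z - y))) x = φ' * (x j - y j : ℝ) / (enorm3 (x - y) : ℝ) := by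
  rw [pd_eq_of_hasFDerivAt (f := fun z => φ (enorm3 (z - y)))
    (hφ.hasFDerivAt.comp x (hasFDerivAt_enorm3_sub hx))]
  simp only [comp_smulₛₗ, map_inv₀, Real.ringHom_apply, smul_apply, comp_apply, sum_apply,
    proj_apply, Pi.single_apply, smul_eq_mul, mul_ite, mul_one, mul_zero, Finset.sum_ite_eq',
    Finset.mem_univ, ↓reduceIte, toSpanSingleton_apply, real_smul, ofReal_sub, ofReal_inv]
  ring

theorem lap_radial {φ φ' : ℝ → ℂ} {φ'' : ℂ} (hx : x ≠ y)
    (hφ : ∀ t > 0, HasDerivAt φ (φ' t) t) (hφ' : HasDerivAt φ' φ'' (enorm3 (x - y))) :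
    lap (fun z => φ (enorm3 (z - y))) x =
      φ'' + 2 * φ' (enorm3 (x - y)) / (enorm3 (x - y) : ℂ) := by
  set r := enorm3 (x - y)
  have hr : 0 < r := enorm3_pos (sub_ne_zero.mpr hx)
  have hψ := hasDerivAt_div_ofReal hφ' hr.ne'
  have hfirst (j : Fin 3) : pd j (fun z => φ (enorm3 (z - y))) =ᶠ[𝓝 x]
      fun z => φ' (enorm3 (z - y)) / (enorm3 (z - y) : ℂ) * ((z j - y j : ℝ) : ℂ) := by
    filter_upwards [isOpen_compl_singleton.mem_nhds hx] with z hz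
    rw [pd_radial hz (hφ _ (enorm3_pos (sub_ne_zero.mpr hz)))]
    ring
  have hsecond (j : Fin 3) : pd j (pd j (fun z => φ (enorm3 (z - y)))) x =
      (φ'' * r - φ' r) / (r : ℂ) ^ 2 * (x j - y j : ℝ) ^ 2 / r + φ' r / r := by
    rw [pd_congr_of_eventuallyEq (hfirst j),
      pd_mul (differentiableAt_radial hx hψ.differentiableAt) (by fun_prop), pd_radial hx hψ,
      pd_ofReal_apply_sub]
    ring
  have hsum : ((x 0 - y 0 : ℝ) : ℂ) ^ 2 + ((x 1 - y 1 : ℝ) : ℂ) ^ 2 + ((x 2 - y 2 : ℝ) : ℂ) ^ 2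
      = (r : ℂ) ^ 2 := by
    exact_mod_cast (Fin.sum_univ_three _).symm.trans (sum_sq_eq_enorm3_sq (x - y))
  have hr' : (r : ℂ) ≠ 0 := ofReal_ne_zero.mpr hr.ne'
  rw [lap, hsecond, hsecond, hsecond]
  field_simp
  linear_combination (φ'' * r - φ' r) * hsum

theorem lap_div_radial {g g' : ℝ → ℂ} {g'' : ℂ} (hx : x ≠ y)
    (hg : ∀ t > 0, HasDerivAt g (g' t) t) (hg' : HasDerivAt g' g'' (enorm3 (x - y))) :
    lap (fun z => g (enorm3 (z - y)) / (enorm3 (z - y) : ℂ)) x = g'' / (enorm3 (x - y) : ℂ) := by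
  set r := enorm3 (x - y) with hr_def
  have hr : 0 < r := enorm3_pos (sub_ne_zero.mpr hx)
  have hr' : (r : ℂ) ≠ 0 := ofReal_ne_zero.mpr hr.ne'
  have hφ (t : ℝ) (ht : t > 0) : HasDerivAt (fun s => g s / s) ((g' t - g t / t) / t) t := by
    have ht' : (t : ℂ) ≠ 0 := ofReal_ne_zero.mpr ht.ne'
    exact (hasDerivAt_div_ofReal (hg t ht) ht.ne').congr_deriv (by field_simp)
  have hφ' := hasDerivAt_div_ofReal (hg'.fun_sub (hasDerivAt_div_ofReal (hg r hr) hr.ne')) hr.ne'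
  rw [lap_radial hx hφ hφ', ← hr_def]
  field_simp
  ring

end Radial

/-- The Helmholtz Green's function `u(x) = exp(i k ‖x−y‖)/(4π ‖x−y‖)` is twice
continuously differentiable away from `y` and satisfies `Δu + k² u = 0` for `x ≠ y`. -/
theorem statement0 (k : ℂ) (y : Fin 3 → ℝ) :
    ContDiffOn ℝ 2 (fun x => G k x y) {y}ᶜ ∧
      ∀ x : Fin 3 → ℝ, x ≠ y →
        lap (fun z => G k z y) x + k ^ 2 * G k x y = 0 := by
  have hπ : 4 * (Real.pi : ℂ) ≠ 0 := by simp [Real.pi_ne_zero]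
  refine ⟨fun x hx => ?_, fun x hx => ?_⟩
  · have hr := enorm3_pos (sub_ne_zero.mpr hx)
    exact ((contDiffAt_cexp_mul_div_mul 2 hπ hr.ne').comp x
      (contDiffAt_enorm3_sub 2 hx)).contDiffWithinAt
  · have hwave := hasDerivAt_cexp_mul_div (I * k) (4 * Real.pi)
    have hG : (fun z => G k z y) = fun z =>
        exp (I * k * enorm3 (z - y)) / (4 * Real.pi) / (enorm3 (z - y) : ℂ) :=
      funext fun z => (div_div _ _ _).symm
    rw [hG, lap_div_radial hx (fun t _ => hwave t) ((hwave _).const_mul (I * k)), G, ← div_div]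
    linear_combination
      (exp (I * k * enorm3 (x - y)) / (4 * Real.pi) / enorm3 (x - y)) * k ^ 2 * I_sq
end
end

section
/- Let k ∈ ℂ, let K ⊂ ℝ³ be compact, and let f : ℝ³ → ℂ³ be a bounded measurable function vanishing outside K. Define the vector potential u : ℝ³ \ K → ℂ³ componentwise by u(x) = ∫_K exp(i k ‖x−y‖)/(4π ‖x−y‖) · f(y) dy (Lebesgue integral). Then for every x ∉ K, ∇×(∇×u)(x) = k² u(x) + ∇(∇·u)(x). -/
noncomputable section

open MeasureTheory

/-- The curl `∇×F = (∂₂F₃−∂₃F₂, ∂₃F₁−∂₁F₃, ∂₁F₂−∂₂F₁)` of a vector field. -/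
def curl (F : (Fin 3 → ℝ) → Fin 3 → ℂ) (x : Fin 3 → ℝ) : Fin 3 → ℂ :=
  ![pd 1 (fun z => F z 2) x - pd 2 (fun z => F z 1) x,
    pd 2 (fun z => F z 0) x - pd 0 (fun z => F z 2) x,
    pd 0 (fun z => F z 1) x - pd 1 (fun z => F z 0) x]

/-- The divergence `∇·F = ∂₁F₁ + ∂₂F₂ + ∂₃F₃` of a vector field. -/
def divg (F : (Fin 3 → ℝ) → Fin 3 → ℂ) (x : Fin 3 → ℝ) : ℂ :=
  pd 0 (fun z => F z 0) x + pd 1 (fun z => F z 1) x + pd 2 (fun z => F z 2) x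

/-!
Away from `K` the potential may be differentiated twice under the integral sign, so its second
partial derivatives are the potentials of the second partial derivatives of the kernel
`g(w) = e^{ik|w|}/(4π|w|)`. Hence its Hessian is symmetric, and its Laplacian is the potential of
`Δg = g'' + 2g'/|w| = -k² g`. The vector identity `∇×∇×u = ∇(∇·u) - Δu` then gives the claim.
-/

open Filter Topology Complex
open scoped Real

theorem eventually_forall_sub_mem {G : Type*} [TopologicalSpace G] [Sub G] [ContinuousSub G]
    {U K : Set G} {x : G} (hU : IsOpen U) (hK : IsCompact K) (hx : ∀ y ∈ K, x - y ∈ U) :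
    ∀ᶠ z in 𝓝 x, ∀ y ∈ K, z - y ∈ U :=
  hK.eventually_forall_of_forall_eventually fun y hy =>
    (continuous_sub.continuousAt (x := (x, y))).preimage_mem_nhds (hU.mem_nhds (hx y hy))

theorem exists_isCompact_forall_sub_mem {E : Type*} [SeminormedAddCommGroup E] [ProperSpace E]
    {U K : Set E} {x : E} (hU : IsOpen U) (hK : IsCompact K) (hx : ∀ y ∈ K, x - y ∈ U) :
    ∃ δ > 0, ∃ S ⊆ U, IsCompact S ∧ ∀ z ∈ Metric.closedBall x δ, ∀ y ∈ K, z - y ∈ S := by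
  obtain ⟨δ, hδ, hball⟩ := Metric.eventually_nhds_iff_ball.mp
    (eventually_forall_sub_mem hU hK hx)
  refine ⟨δ / 2, half_pos hδ, (fun p : E × E => p.1 - p.2) '' (Metric.closedBall x (δ / 2) ×ˢ K),
    ?_, ((isCompact_closedBall x _).prod hK).image continuous_sub,
    fun z hz y hy => ⟨(z, y), ⟨hz, hy⟩, rfl⟩⟩
  rintro _ ⟨⟨z, y⟩, ⟨hz, hy⟩, rfl⟩
  exact hball z (Metric.closedBall_subset_ball (by linarith) hz) y hy

theorem hasFDerivAt_setIntegral_sub_mul {E : Type*} [NormedAddCommGroup E] [NormedSpace ℝ E]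
    [FiniteDimensional ℝ E] [MeasurableSpace E] [BorelSpace E] {μ : Measure E} {U K : Set E}
    {φ f : E → ℂ} {x : E} (hU : IsOpen U) (hφ : ContDiffOn ℝ 1 φ U) (hK : IsCompact K)
    (hf : IntegrableOn f K μ) (hx : ∀ y ∈ K, x - y ∈ U) :
    HasFDerivAt (fun z => ∫ y in K, φ (z - y) * f y ∂μ)
      (∫ y in K, f y • fderiv ℝ φ (x - y) ∂μ) x := by
  obtain ⟨δ, hδ, S, hSU, hS, hmemS⟩ := exists_isCompact_forall_sub_mem hU hK hx
  have hsubU : ∀ z ∈ Metric.closedBall x δ, Set.MapsTo (fun y => z - y) K U :=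
    fun z hz y hy => hSU (hmemS z hz y hy)
  have hφ' := hφ.continuousOn_fderiv_of_isOpen hU le_rfl
  obtain ⟨M, hM⟩ := hS.exists_bound_of_continuousOn (hφ'.mono hSU)
  have hx₀ : x ∈ Metric.closedBall x δ := Metric.mem_closedBall_self hδ.le
  have hball_sub : Metric.ball x δ ⊆ Metric.closedBall x δ := Metric.ball_subset_closedBall
  refine hasFDerivAt_integral_of_dominated_of_fderiv_le (𝕜 := ℝ)
    (Metric.ball_mem_nhds x hδ) (F := fun z y => φ (z - y) * f y)
    (F' := fun z y => f y • fderiv ℝ φ (z - y)) (bound := fun y => ‖f y‖ * M) ?_ ?_ ?_ ?_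
    (hf.norm.mul_const M) ?_
  · filter_upwards [Metric.ball_mem_nhds x hδ] with z hz
    exact (IntegrableOn.continuousOn_mul
      (hφ.continuousOn.comp (by fun_prop) (hsubU z (hball_sub hz))) hf hK).1
  · exact IntegrableOn.continuousOn_mul (hφ.continuousOn.comp (by fun_prop) (hsubU x hx₀)) hf hK
  · exact (hf.smul_continuousOn (hφ'.comp (by fun_prop) (hsubU x hx₀)) hK).1
  · refine (ae_restrict_iff' hK.measurableSet).mpr (Eventually.of_forall fun y hy z hz => ?_)
    rw [norm_smul]
    exact mul_le_mul_of_nonneg_left (hM _ (hmemS z (hball_sub hz) y hy)) (norm_nonneg _)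
  · refine (ae_restrict_iff' hK.measurableSet).mpr (Eventually.of_forall fun y hy z hz => ?_)
    have hd : DifferentiableAt ℝ φ (z - y) :=
      (hφ.differentiableOn one_ne_zero _ (hsubU z (hball_sub hz) hy)).differentiableAt
        (hU.mem_nhds (hsubU z (hball_sub hz) hy))
    exact (hd.hasFDerivAt.comp z ((hasFDerivAt_id z).sub_const y)).mul_const (f y)

section PartialDerivatives

variable {φ F₁ F₂ : (Fin 3 → ℝ) → ℂ} {U : Set (Fin 3 → ℝ)} {x : Fin 3 → ℝ}

theorem ContDiffOn.pd {n : WithTop ℕ∞} (hφ : ContDiffOn ℝ (n + 1) φ U) (hU : IsOpen U)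
    (i : Fin 3) : ContDiffOn ℝ n (pd i φ) U :=
  (hφ.fderiv_of_isOpen hU le_rfl).clm_apply contDiffOn_const

theorem pd_pd_comm (hφ : ContDiffAt ℝ 2 φ x) (i j : Fin 3) :
    pd j (pd i φ) x = pd i (pd j φ) x := by
  have hd : DifferentiableAt ℝ (fderiv ℝ φ) x :=
    (hφ.fderiv_right (m := 1) le_rfl).differentiableAt one_ne_zero
  change fderiv ℝ (fun y => fderiv ℝ φ y (Pi.single i 1)) x (Pi.single j 1) =
    fderiv ℝ (fun y => fderiv ℝ φ y (Pi.single j 1)) x (Pi.single i 1)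
  rw [fderiv_clm_apply hd (differentiableAt_const _),
    fderiv_clm_apply hd (differentiableAt_const _)]
  simpa using hφ.isSymmSndFDerivAt (by simp) (Pi.single j 1) (Pi.single i 1)

theorem pd_fun_add (h₁ : DifferentiableAt ℝ F₁ x) (h₂ : DifferentiableAt ℝ F₂ x) (i : Fin 3) :
    pd i (fun z => F₁ z + F₂ z) x = pd i F₁ x + pd i F₂ x := by
  rw [pd, fderiv_fun_add h₁ h₂]
  rfl

theorem pd_fun_sub (h₁ : DifferentiableAt ℝ F₁ x) (h₂ : DifferentiableAt ℝ F₂ x) (i : Fin 3) :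
    pd i (fun z => F₁ z - F₂ z) x = pd i F₁ x - pd i F₂ x := by
  rw [pd, fderiv_fun_sub h₁ h₂]
  rfl

theorem curl_curl_eq_pd_divg_sub_laplacian (V : (Fin 3 → ℝ) → Fin 3 → ℂ)
    (hd : ∀ i j, DifferentiableAt ℝ (pd i (fun z => V z j)) x)
    (hs : ∀ i j l, pd j (pd i (fun z => V z l)) x = pd i (pd j (fun z => V z l)) x)
    (i : Fin 3) :
    curl (curl V) x i = pd i (divg V) x - ∑ j, pd j (pd j (fun z => V z i)) x := by
  have hdivg : pd i (divg V) x = ∑ j, pd i (pd j (fun z => V z j)) x := by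
    change pd i (fun z => pd 0 (fun z => V z 0) z + pd 1 (fun z => V z 1) z +
      pd 2 (fun z => V z 2) z) x = _
    rw [pd_fun_add ((hd 0 0).fun_add (hd 1 1)) (hd 2 2), pd_fun_add (hd 0 0) (hd 1 1),
      Fin.sum_univ_three]
  rw [hdivg]
  fin_cases i <;>
    simp only [Fin.zero_eta, Fin.mk_one, Fin.reduceFinMk, curl, Matrix.cons_val_zero,
      Matrix.cons_val_one, Matrix.cons_val_two, Matrix.tail_cons, Matrix.head_cons,
      Fin.sum_univ_three] <;>
    rw [pd_fun_sub (hd _ _) (hd _ _), pd_fun_sub (hd _ _) (hd _ _)]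
  · linear_combination hs 0 1 1 + hs 0 2 2
  · linear_combination hs 1 0 0 + hs 1 2 2
  · linear_combination hs 2 0 0 + hs 2 1 1

end PartialDerivatives

section Potential

variable {μ : Measure (Fin 3 → ℝ)} {U K : Set (Fin 3 → ℝ)} {φ f : (Fin 3 → ℝ) → ℂ}
  {x : Fin 3 → ℝ}

theorem pd_setIntegral_sub_mul (hU : IsOpen U) (hφ : ContDiffOn ℝ 1 φ U) (hK : IsCompact K)
    (hf : IntegrableOn f K μ) (hx : ∀ y ∈ K, x - y ∈ U) (i : Fin 3) :
    pd i (fun z => ∫ y in K, φ (z - y) * f y ∂μ) x = ∫ y in K, pd i φ (x - y) * f y ∂μ := by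
  have hint : IntegrableOn (fun y => f y • fderiv ℝ φ (x - y)) K μ :=
    hf.smul_continuousOn ((hφ.continuousOn_fderiv_of_isOpen hU le_rfl).comp (by fun_prop) hx) hK
  rw [pd, (hasFDerivAt_setIntegral_sub_mul hU hφ hK hf hx).fderiv,
    ContinuousLinearMap.integral_apply hint]
  simp only [smul_apply, smul_eq_mul, pd, mul_comm]

theorem pd_setIntegral_sub_mul_eventuallyEq (hU : IsOpen U) (hφ : ContDiffOn ℝ 1 φ U)
    (hK : IsCompact K) (hf : IntegrableOn f K μ) (hx : ∀ y ∈ K, x - y ∈ U) (i : Fin 3) :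
    pd i (fun z => ∫ y in K, φ (z - y) * f y ∂μ) =ᶠ[𝓝 x]
      fun z => ∫ y in K, pd i φ (z - y) * f y ∂μ := by
  filter_upwards [eventually_forall_sub_mem hU hK hx] with z hz
  exact pd_setIntegral_sub_mul hU hφ hK hf hz i

theorem differentiableAt_pd_setIntegral_sub_mul (hU : IsOpen U) (hφ : ContDiffOn ℝ 2 φ U)
    (hK : IsCompact K) (hf : IntegrableOn f K μ) (hx : ∀ y ∈ K, x - y ∈ U) (i : Fin 3) :
    DifferentiableAt ℝ (pd i (fun z => ∫ y in K, φ (z - y) * f y ∂μ)) x :=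
  (hasFDerivAt_setIntegral_sub_mul hU (hφ.pd hU i) hK hf hx).differentiableAt.congr_of_eventuallyEq
    (pd_setIntegral_sub_mul_eventuallyEq hU (hφ.of_le one_le_two) hK hf hx i)

theorem pd_pd_setIntegral_sub_mul (hU : IsOpen U) (hφ : ContDiffOn ℝ 2 φ U)
    (hK : IsCompact K) (hf : IntegrableOn f K μ) (hx : ∀ y ∈ K, x - y ∈ U) (i j : Fin 3) :
    pd j (pd i (fun z => ∫ y in K, φ (z - y) * f y ∂μ)) x =
      ∫ y in K, pd j (pd i φ) (x - y) * f y ∂μ := by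
  rw [pd, (pd_setIntegral_sub_mul_eventuallyEq hU (hφ.of_le one_le_two) hK hf hx i).fderiv_eq]
  exact pd_setIntegral_sub_mul hU (hφ.pd hU i) hK hf hx j

theorem pd_pd_setIntegral_sub_mul_comm (hU : IsOpen U) (hφ : ContDiffOn ℝ 2 φ U)
    (hK : IsCompact K) (hf : IntegrableOn f K μ) (hx : ∀ y ∈ K, x - y ∈ U) (i j : Fin 3) :
    pd j (pd i (fun z => ∫ y in K, φ (z - y) * f y ∂μ)) x =
      pd i (pd j (fun z => ∫ y in K, φ (z - y) * f y ∂μ)) x := by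
  rw [pd_pd_setIntegral_sub_mul hU hφ hK hf hx, pd_pd_setIntegral_sub_mul hU hφ hK hf hx]
  refine setIntegral_congr_fun hK.measurableSet fun y hy => ?_
  rw [pd_pd_comm (hφ.contDiffAt (hU.mem_nhds (hx y hy)))]

theorem sum_pd_pd_setIntegral_sub_mul (hU : IsOpen U) (hφ : ContDiffOn ℝ 2 φ U)
    (hK : IsCompact K) (hf : IntegrableOn f K μ) (hx : ∀ y ∈ K, x - y ∈ U) {c : ℂ}
    (hφc : ∀ w ∈ U, ∑ i, pd i (pd i φ) w = c * φ w) :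
    ∑ i, pd i (pd i (fun z => ∫ y in K, φ (z - y) * f y ∂μ)) x =
      c * ∫ y in K, φ (x - y) * f y ∂μ := by
  have hint (i : Fin 3) : IntegrableOn (fun y => pd i (pd i φ) (x - y) * f y) K μ :=
    IntegrableOn.continuousOn_mul
      (((hφ.pd hU i).pd (n := 0) hU i).continuousOn.comp (by fun_prop) hx) hf hK
  simp only [pd_pd_setIntegral_sub_mul hU hφ hK hf hx]
  rw [← integral_finsetSum _ fun i _ => hint i, ← integral_const_mul]
  refine setIntegral_congr_fun hK.measurableSet fun y hy => ?_
  simp only [← Finset.sum_mul, hφc _ (hx y hy), mul_assoc]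

end Potential

section EuclideanNorm

variable {w : Fin 3 → ℝ}

theorem enorm3_sq (w : Fin 3 → ℝ) : enorm3 w ^ 2 = w 0 ^ 2 + w 1 ^ 2 + w 2 ^ 2 :=
  Real.sq_sqrt (by positivity)

theorem enorm3_pos_s3 (hw : w ≠ 0) : 0 < enorm3 w := by
  refine Real.sqrt_pos.mpr (lt_of_le_of_ne (by positivity) fun h => hw ?_)
  ext i
  fin_cases i <;> simp only [Fin.zero_eta, Fin.mk_one, Fin.reduceFinMk, Pi.zero_apply] <;>
    nlinarith [sq_nonneg (w 0), sq_nonneg (w 1), sq_nonneg (w 2)]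

theorem contDiffAt_enorm3 {n : WithTop ℕ∞} (hw : w ≠ 0) : ContDiffAt ℝ n enorm3 w := by
  have : ContDiffAt ℝ n (fun z : Fin 3 → ℝ => z 0 ^ 2 + z 1 ^ 2 + z 2 ^ 2) w := by fun_prop
  exact this.sqrt (by rw [← enorm3_sq]; exact (pow_pos (enorm3_pos_s3 hw) 2).ne')

theorem hasFDerivAt_enorm3 (hw : w ≠ 0) :
    HasFDerivAt enorm3
      ((enorm3 w)⁻¹ • ∑ i, w i • ContinuousLinearMap.proj (R := ℝ) (φ := fun _ => ℝ) i) w := by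
  have h (i : Fin 3) : HasFDerivAt (fun z : Fin 3 → ℝ => z i ^ 2)
      ((2 * w i) • ContinuousLinearMap.proj (R := ℝ) (φ := fun _ => ℝ) i) w := by
    simpa using ((ContinuousLinearMap.proj (R := ℝ) (φ := fun _ : Fin 3 => ℝ) i).hasFDerivAt
      (x := w)).pow 2
  have hpos := enorm3_pos_s3 hw
  have hQ := (((h 0).fun_add (h 1)).fun_add (h 2)).sqrt (by rw [← enorm3_sq]; positivity)
  rw [show √(w 0 ^ 2 + w 1 ^ 2 + w 2 ^ 2) = enorm3 w from rfl] at hQ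
  refine hQ.congr_fderiv ?_
  ext v
  simp only [smul_apply, add_apply, Fin.sum_univ_three, ContinuousLinearMap.proj_apply,
    smul_eq_mul]
  field_simp

end EuclideanNorm

section Radial

variable {h h' : ℝ → ℂ} {w : Fin 3 → ℝ}

theorem pd_radial_s3 (hw : w ≠ 0) {c : ℂ} (hh : HasDerivAt h c (enorm3 w)) (i : Fin 3) :
    pd i (fun z => h (enorm3 z)) w = w i * (c / enorm3 w) := by
  have hd : HasFDerivAt (fun z => h (enorm3 z)) _ w :=
    hh.hasFDerivAt.comp w (hasFDerivAt_enorm3 hw)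
  rw [pd, hd.fderiv]
  simp only [ContinuousLinearMap.comp_smulₛₗ, map_inv₀, Real.ringHom_apply, smul_apply,
    ContinuousLinearMap.comp_apply, sum_apply, ContinuousLinearMap.proj_apply, Pi.single_apply,
    smul_eq_mul, mul_ite, mul_one, mul_zero, Finset.sum_ite_eq', Finset.mem_univ, ↓reduceIte,
    ContinuousLinearMap.toSpanSingleton_apply, real_smul, ofReal_inv]
  ring

theorem pd_coord_mul {F : (Fin 3 → ℝ) → ℂ} (hF : DifferentiableAt ℝ F w) (i j : Fin 3) :
    pd j (fun z => z i * F z) w = (if i = j then F w else 0) + w i * pd j F w := by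
  have hc : HasFDerivAt (fun z : Fin 3 → ℝ => (z i : ℂ)) _ w :=
    ofRealCLM.hasFDerivAt.comp w (hasFDerivAt_apply i w)
  rw [pd, (hc.fun_mul hF.hasFDerivAt).fderiv]
  simp only [pd, add_apply, smul_apply, ContinuousLinearMap.comp_apply]
  split_ifs with hij <;> simp [add_comm, hij]

theorem pd_pd_radial (hw : w ≠ 0) (hh : ∀ r, 0 < r → HasDerivAt h (h' r) r) {c : ℂ}
    (hq : HasDerivAt (fun r => h' r / r) c (enorm3 w)) (i j : Fin 3) :
    pd j (pd i (fun z => h (enorm3 z))) w =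
      (if i = j then h' (enorm3 w) / enorm3 w else 0) + w i * (w j * (c / enorm3 w)) := by
  have heq : pd i (fun z => h (enorm3 z)) =ᶠ[𝓝 w] fun z => z i * (h' (enorm3 z) / enorm3 z) := by
    filter_upwards [isClosed_singleton.isOpen_compl.mem_nhds hw] with z hz
    exact pd_radial_s3 hz (hh _ (enorm3_pos_s3 hz)) i
  rw [pd, heq.fderiv_eq, ← pd,
    pd_coord_mul (F := fun z => h' (enorm3 z) / enorm3 z)
      (hq.differentiableAt.comp w (hasFDerivAt_enorm3 hw).differentiableAt),
    pd_radial_s3 hw hq j]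

theorem sum_pd_pd_radial (hw : w ≠ 0) (hh : ∀ r, 0 < r → HasDerivAt h (h' r) r) {c : ℂ}
    (hh' : HasDerivAt h' c (enorm3 w)) :
    ∑ i, pd i (pd i (fun z => h (enorm3 z))) w = c + 2 * h' (enorm3 w) / enorm3 w := by
  have hr : (enorm3 w : ℂ) ≠ 0 := ofReal_ne_zero.mpr (enorm3_pos_s3 hw).ne'
  have hq : HasDerivAt (fun r : ℝ => h' r / r) ((c * enorm3 w - h' (enorm3 w)) / enorm3 w ^ 2)
      (enorm3 w) := by
    simpa using hh'.fun_div (hasDerivAt_id (enorm3 w)).ofReal_comp hr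
  have hsq : (enorm3 w : ℂ) ^ 2 = w 0 ^ 2 + w 1 ^ 2 + w 2 ^ 2 := by exact_mod_cast enorm3_sq w
  simp only [Fin.sum_univ_three, pd_pd_radial hw hh hq, ↓reduceIte]
  field_simp
  linear_combination (h' (enorm3 w) - enorm3 w * c) * hsq

end Radial

section HelmholtzKernel

variable {k : ℂ} {r : ℝ}

def helmholtzProfile (k : ℂ) (r : ℝ) : ℂ := cexp (I * k * r) / (4 * π * r)

def helmholtzProfileDeriv (k : ℂ) (r : ℝ) : ℂ :=
  cexp (I * k * r) * (I * k * r - 1) / (4 * π * r ^ 2)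

theorem hasDerivAt_cexp_I_mul (k : ℂ) (r : ℝ) :
    HasDerivAt (fun r : ℝ => cexp (I * k * r)) (I * k * cexp (I * k * r)) r := by
  simpa [mul_comm] using ((hasDerivAt_id r).ofReal_comp.const_mul (I * k)).cexp

theorem hasDerivAt_helmholtzProfile (hr : r ≠ 0) :
    HasDerivAt (helmholtzProfile k) (helmholtzProfileDeriv k r) r := by
  have hd := (hasDerivAt_id r).ofReal_comp.const_mul (4 * π : ℂ)
  refine ((hasDerivAt_cexp_I_mul k r).fun_div hd (by simp [hr, Real.pi_ne_zero])).congr_deriv ?_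
  have hr' : (r : ℂ) ≠ 0 := ofReal_ne_zero.mpr hr
  simp only [helmholtzProfileDeriv, id, ofReal_one]
  field_simp

theorem hasDerivAt_helmholtzProfileDeriv (hr : r ≠ 0) :
    HasDerivAt (helmholtzProfileDeriv k)
      (cexp (I * k * r) * (2 - 2 * (I * k * r) - k ^ 2 * r ^ 2) / (4 * π * r ^ 3)) r := by
  have hn := (hasDerivAt_cexp_I_mul k r).fun_mul
    (((hasDerivAt_id r).ofReal_comp.const_mul (I * k)).sub_const 1)
  have hd := ((hasDerivAt_id r).ofReal_comp.pow 2).const_mul (4 * π : ℂ)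
  refine (hn.fun_div hd (by simp [hr, Real.pi_ne_zero])).congr_deriv ?_
  have hr' : (r : ℂ) ≠ 0 := ofReal_ne_zero.mpr hr
  simp only [id, ofReal_one, Pi.pow_apply, Nat.cast_ofNat, Nat.reduceSub, pow_one]
  field_simp
  linear_combination (k ^ 2 * (r : ℂ) ^ 2) * I_sq

theorem contDiffAt_helmholtzProfile {n : WithTop ℕ∞} (hr : r ≠ 0) :
    ContDiffAt ℝ n (helmholtzProfile k) r := by
  have hF : ContDiffAt ℂ n (fun z : ℂ => cexp (I * k * z) / (4 * π * z)) r := by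
    fun_prop (disch := simp [hr, Real.pi_ne_zero])
  exact (hF.restrict_scalars ℝ).comp r ofRealCLM.contDiff.contDiffAt

theorem contDiffOn_helmholtzKernel {n : WithTop ℕ∞} :
    ContDiffOn ℝ n (fun w => helmholtzProfile k (enorm3 w)) {0}ᶜ := fun _ hw =>
  ((contDiffAt_helmholtzProfile (enorm3_pos_s3 hw).ne').comp _ (contDiffAt_enorm3 hw)).contDiffWithinAt

theorem sum_pd_pd_helmholtzKernel {w : Fin 3 → ℝ} (hw : w ≠ 0) :
    ∑ i, pd i (pd i (fun z => helmholtzProfile k (enorm3 z))) w =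
      -k ^ 2 * helmholtzProfile k (enorm3 w) := by
  have hr := (enorm3_pos_s3 hw).ne'
  have hr' : (enorm3 w : ℂ) ≠ 0 := ofReal_ne_zero.mpr hr
  rw [sum_pd_pd_radial hw (fun r hr => hasDerivAt_helmholtzProfile hr.ne')
    (hasDerivAt_helmholtzProfileDeriv hr)]
  simp only [helmholtzProfileDeriv, helmholtzProfile]
  field_simp
  ring

theorem G_eq_helmholtzProfile (x y : Fin 3 → ℝ) :
    G k x y = helmholtzProfile k (enorm3 (x - y)) :=
  rfl

end HelmholtzKernel

theorem statement3_general (k : ℂ) (K : Set (Fin 3 → ℝ)) (hK : IsCompact K)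
    (f : (Fin 3 → ℝ) → Fin 3 → ℂ) (hmeas : Measurable f)
    (hbdd : ∃ C : ℝ, ∀ y : Fin 3 → ℝ, ∀ i : Fin 3, ‖f y i‖ ≤ C) :
    ∀ x ∉ K, ∀ i : Fin 3,
      curl (curl (fun z i' => ∫ y in K, G k z y * f y i')) x i =
        k ^ 2 * (∫ y in K, G k x y * f y i) +
          pd i (divg (fun z i' => ∫ y in K, G k z y * f y i')) x := by
  obtain ⟨C, hC⟩ := hbdd
  intro x hx i
  have hf (j : Fin 3) : IntegrableOn (fun y => f y j) K :=
    Measure.integrableOn_of_bounded hK.measure_lt_top.ne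
      ((measurable_pi_apply j).comp hmeas).aestronglyMeasurable (ae_of_all _ fun y => hC y j)
  have hxK : ∀ y ∈ K, x - y ∈ ({0}ᶜ : Set (Fin 3 → ℝ)) :=
    fun y hy => sub_ne_zero.mpr (ne_of_mem_of_not_mem hy hx).symm
  have hU : IsOpen ({0}ᶜ : Set (Fin 3 → ℝ)) := isOpen_compl_singleton
  have hg := contDiffOn_helmholtzKernel (k := k) (n := 2)
  simp only [G_eq_helmholtzProfile]
  rw [curl_curl_eq_pd_divg_sub_laplacian _
      (fun j l => differentiableAt_pd_setIntegral_sub_mul hU hg hK (hf l) hxK j)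
      (fun j l m => pd_pd_setIntegral_sub_mul_comm hU hg hK (hf m) hxK j l),
    sum_pd_pd_setIntegral_sub_mul hU hg hK (hf i) hxK fun w hw => sum_pd_pd_helmholtzKernel hw]
  ring

/-- For a bounded measurable current `f` supported in a compact set `K`, the vector
potential `u(x) = ∫_K G_k(x,y) f(y) dy` satisfies
`∇×(∇×u)(x) = k² u(x) + ∇(∇·u)(x)` for every `x ∉ K`. -/
theorem statement3 (k : ℂ) (K : Set (Fin 3 → ℝ)) (hK : IsCompact K)
    (f : (Fin 3 → ℝ) → Fin 3 → ℂ) (hmeas : Measurable f)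
    (hbdd : ∃ C : ℝ, ∀ y : Fin 3 → ℝ, ∀ i : Fin 3, ‖f y i‖ ≤ C)
    (hvanish : ∀ y ∉ K, f y = 0) :
    ∀ x ∉ K, ∀ i : Fin 3,
      curl (curl (fun z i' => ∫ y in K, G k z y * f y i')) x i =
        k ^ 2 * (∫ y in K, G k x y * f y i) +
          pd i (divg (fun z i' => ∫ y in K, G k z y * f y i')) x :=
  statement3_general k K hK f hmeas hbdd
end
end

section
/- Let k ∈ ℂ, let y = (y₁,y₂,y₃) ∈ ℝ³ with y₃ ≠ 0, and let j = (j₁,j₂,j₃) ∈ ℝ³ with image current j_R = (−j₁,−j₂,j₃) = −R j. Define the vector field F(x) = G_k(x,y) j + G_k(x, R y) j_R on ℝ³ \ {y, R y}. Then for every x with x₃ = 0, the first two components of ∇×(∇×F)(x) vanish; that is, the tangential part of the double curl of F vanishes on the plane x₃ = 0. -/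
noncomputable section

open MeasureTheory

/-- Reflection across the plane `x₃ = 0`: `R(x₁,x₂,x₃) = (x₁,x₂,−x₃)`. -/
def refl3 (x : Fin 3 → ℝ) : Fin 3 → ℝ := ![x 0, x 1, -x 2]

/-!
Write `R_* F (z) := R (F (R z))` for the reflected field. Since `R` is orthogonal with
determinant `-1` and the curl is a pseudovector, `curl (R_* F) = -R_* (curl F)`, so the
double curl commutes with `R_*`. The image current is chosen so that `R_* F = -F`, hence also
`R_* (∇×∇×F) = -∇×∇×F`; at a point of the plane `R x = x`, where `R` fixes the tangential
components, this forces them to vanish.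
-/

lemma refl3_refl3 (x : Fin 3 → ℝ) : refl3 (refl3 x) = x := by
  funext i; fin_cases i <;> simp [refl3]

lemma refl3_eq_self_of_two_eq_zero {x : Fin 3 → ℝ} (hx : x 2 = 0) : refl3 x = x := by
  funext i; fin_cases i <;> simp [refl3, hx]

def refl3CLE : (Fin 3 → ℝ) ≃L[ℝ] (Fin 3 → ℝ) :=
  LinearEquiv.toContinuousLinearEquiv
    { toFun := refl3
      invFun := refl3
      map_add' a b := by funext i; fin_cases i <;> simp [refl3, add_comm]
      map_smul' c a := by funext i; fin_cases i <;> simp [refl3]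
      left_inv := refl3_refl3
      right_inv := refl3_refl3 }

lemma refl3_single_of_ne {i : Fin 3} (hi : i ≠ 2) :
    refl3 (Pi.single i 1) = Pi.single i 1 := by
  funext l; fin_cases i <;> fin_cases l <;> simp_all [refl3]

lemma refl3_single_two : refl3 (Pi.single 2 1) = -Pi.single 2 1 := by
  funext l; fin_cases l <;> simp [refl3]

-- Holds even where `F` is not differentiable: `fderiv` commutes with composition by a
-- continuous linear equivalence.
lemma pd_comp_refl3 (F : (Fin 3 → ℝ) → Fin 3 → ℂ) (l i : Fin 3) (x : Fin 3 → ℝ) :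
    pd i (fun z => F (refl3 z) l) x =
      fderiv ℝ (fun z => F z l) (refl3 x) (refl3 (Pi.single i 1)) :=
  congrArg (· (Pi.single i 1)) (refl3CLE.comp_right_fderiv (f := fun z => F z l) (x := x))

lemma pd_comp_refl3_of_ne (F : (Fin 3 → ℝ) → Fin 3 → ℂ) (l : Fin 3) {i : Fin 3} (hi : i ≠ 2)
    (x : Fin 3 → ℝ) : pd i (fun z => F (refl3 z) l) x = pd i (fun z => F z l) (refl3 x) := by
  rw [pd_comp_refl3, refl3_single_of_ne hi, pd]

lemma pd_comp_refl3_two (F : (Fin 3 → ℝ) → Fin 3 → ℂ) (l : Fin 3) (x : Fin 3 → ℝ) :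
    pd 2 (fun z => F (refl3 z) l) x = -pd 2 (fun z => F z l) (refl3 x) := by
  rw [pd_comp_refl3, refl3_single_two, map_neg, pd]

lemma pd_neg (f : (Fin 3 → ℝ) → ℂ) (i : Fin 3) (x : Fin 3 → ℝ) :
    pd i (fun z => -f z) x = -pd i f x := by
  simp only [pd, fderiv_fun_neg, neg_apply]

def reflectField (F : (Fin 3 → ℝ) → Fin 3 → ℂ) (z : Fin 3 → ℝ) : Fin 3 → ℂ :=
  ![F (refl3 z) 0, F (refl3 z) 1, -F (refl3 z) 2]

lemma curl_reflectField (F : (Fin 3 → ℝ) → Fin 3 → ℂ) :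
    curl (reflectField F) = -reflectField (curl F) := by
  funext z i
  fin_cases i <;>
    simp [curl, reflectField, pd_neg, pd_comp_refl3_two, pd_comp_refl3_of_ne] <;> ring

lemma curl_neg (F : (Fin 3 → ℝ) → Fin 3 → ℂ) : curl (-F) = -curl F := by
  funext z i
  fin_cases i <;> simp [curl, Pi.neg_apply, pd_neg] <;> ring

lemma curl_curl_reflectField (F : (Fin 3 → ℝ) → Fin 3 → ℂ) :
    curl (curl (reflectField F)) = reflectField (curl (curl F)) := by
  rw [curl_reflectField, curl_neg, curl_reflectField, neg_neg]

lemma tangential_eq_zero_of_reflectField_eq_neg {H : (Fin 3 → ℝ) → Fin 3 → ℂ}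
    (hH : reflectField H = -H) {x : Fin 3 → ℝ} (hx : x 2 = 0) :
    H x 0 = 0 ∧ H x 1 = 0 := by
  have hfix := refl3_eq_self_of_two_eq_zero hx
  have h0 := congrFun (congrFun hH x) 0
  have h1 := congrFun (congrFun hH x) 1
  simp only [reflectField, hfix, Matrix.cons_val, Pi.neg_apply] at h0 h1
  exact ⟨by linear_combination h0 / 2, by linear_combination h1 / 2⟩

lemma G_refl3 (k : ℂ) (z w : Fin 3 → ℝ) : G k (refl3 z) w = G k z (refl3 w) := by
  have : enorm3 (refl3 z - w) = enorm3 (z - refl3 w) := by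
    simp only [enorm3, Pi.sub_apply, refl3, Matrix.cons_val]
    ring_nf
  rw [G, G, this]

def imageDipoleField (k : ℂ) (y j : Fin 3 → ℝ) (z : Fin 3 → ℝ) : Fin 3 → ℂ :=
  fun i => G k z y * (j i : ℂ) + G k z (refl3 y) * ((-refl3 j) i : ℂ)

lemma reflectField_imageDipoleField (k : ℂ) (y j : Fin 3 → ℝ) :
    reflectField (imageDipoleField k y j) = -imageDipoleField k y j := by
  funext z i
  simp only [reflectField, imageDipoleField, Pi.neg_apply, G_refl3, refl3_refl3]
  fin_cases i <;> simp [refl3]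
  ring

theorem statement11_general (k : ℂ) (y : Fin 3 → ℝ) (j : Fin 3 → ℝ)
    (x : Fin 3 → ℝ) (hx : x 2 = 0) :
    curl (curl (fun z i => G k z y * (j i : ℂ) + G k z (refl3 y) * ((-refl3 j) i : ℂ))) x 0 = 0 ∧
      curl (curl (fun z i => G k z y * (j i : ℂ) + G k z (refl3 y) * ((-refl3 j) i : ℂ))) x 1 = 0 := by
  have hodd : reflectField (curl (curl (imageDipoleField k y j))) =
      -curl (curl (imageDipoleField k y j)) := by
    rw [← curl_curl_reflectField, reflectField_imageDipoleField, curl_neg, curl_neg]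
  exact tangential_eq_zero_of_reflectField_eq_neg hodd hx

/-- For an electric point current `j` at `y` (with `y₃ ≠ 0`) together with its image
current `j_R = −Rj` at `Ry`, the field `F(x) = G_k(x,y)j + G_k(x,Ry)j_R` has a double
curl whose tangential part vanishes on the plane `x₃ = 0`. -/
theorem statement11 (k : ℂ) (y : Fin 3 → ℝ) (hy : y 2 ≠ 0) (j : Fin 3 → ℝ)
    (x : Fin 3 → ℝ) (hx : x 2 = 0) :
    curl (curl (fun z i => G k z y * (j i : ℂ) + G k z (refl3 y) * ((-refl3 j) i : ℂ))) x 0 = 0 ∧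
      curl (curl (fun z i => G k z y * (j i : ℂ) + G k z (refl3 y) * ((-refl3 j) i : ℂ))) x 1 = 0 :=
  statement11_general k y j x hx
end
end

section
/- Let k ∈ ℂ, m ∈ ℤ, and L > 0. Let r, z : [0,L] → ℝ be continuous with r(s) ≥ 0 for all s (the generating curve of a surface of revolution), and let u : [0,L] → ℂ be continuous. Let (r₀, θ₀, z₀) be cylindrical coordinates of a target point x₀ = (r₀ cos θ₀, r₀ sin θ₀, z₀) with r₀ ≥ 0, and assume (r₀, z₀) ≠ (r(s), z(s)) for every s ∈ [0,L]. Then, with y(s,θ) = (r(s) cos θ, r(s) sin θ, z(s)), the double integral separates as ∫₀^{2π} ∫₀^L G_k(x₀, y(s,θ)) u(s) exp(i m θ) r(s) ds dθ = 2π exp(i m θ₀) ∫₀^L G_m(r₀, z₀, r(s), z(s)) u(s) r(s) ds. -/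
noncomputable section

open MeasureTheory intervalIntegral

/-- The cylindrical distance function
`R(φ) = √(r² + r'² − 2rr'cos φ + (z−z')²)`. -/
def Rcyl (r z r' z' φ : ℝ) : ℝ :=
  Real.sqrt (r ^ 2 + r' ^ 2 - 2 * r * r' * Real.cos φ + (z - z') ^ 2)

/-- The modal Green's function
`G_m(r,z,r',z') = (1/2π) ∫₀^{2π} exp(ikR(φ))/(4πR(φ)) exp(−imφ) dφ`. -/
def Gm (k : ℂ) (m : ℤ) (r z r' z' : ℝ) : ℂ :=
  (1 / (2 * (Real.pi : ℂ))) *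
    ∫ φ in (0 : ℝ)..(2 * Real.pi),
      Complex.exp (Complex.I * k * (Rcyl r z r' z' φ : ℂ)) /
          (4 * (Real.pi : ℂ) * (Rcyl r z r' z' φ : ℂ)) *
        Complex.exp (-Complex.I * (m : ℂ) * (φ : ℂ))

lemma enorm3_eq (a b c d θ₀ θ : ℝ) :
    enorm3 (![a * Real.cos θ₀, a * Real.sin θ₀, c] - ![b * Real.cos θ, b * Real.sin θ, d])
      = Rcyl a c b d (θ - θ₀) := by
  unfold enorm3 Rcyl
  congr 1
  simp only [Pi.sub_apply, Matrix.cons_val_zero, Matrix.cons_val_one, Matrix.head_cons,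
    Matrix.cons_val_two, Matrix.tail_cons]
  have h1 := Real.sin_sq_add_cos_sq θ
  have h2 := Real.sin_sq_add_cos_sq θ₀
  rw [Real.cos_sub]
  linear_combination a ^ 2 * h2 + b ^ 2 * h1

lemma rcyl_pos (a c b d φ : ℝ) (ha : 0 ≤ a) (hb : 0 ≤ b) (hne : (a, c) ≠ (b, d)) :
    0 < Rcyl a c b d φ := by
  have key : 0 < (a - b) ^ 2 + (c - d) ^ 2 := by
    by_contra h
    push_neg at h
    have h1 : a = b := by nlinarith [sq_nonneg (a - b), sq_nonneg (c - d)]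
    have h2 : c = d := by nlinarith [sq_nonneg (a - b), sq_nonneg (c - d)]
    exact hne (by rw [h1, h2])
  apply Real.sqrt_pos.mpr
  nlinarith [Real.cos_le_one φ, mul_nonneg ha hb]

lemma rcyl_even (a c b d φ : ℝ) : Rcyl a c b d (-φ) = Rcyl a c b d φ := by
  unfold Rcyl; rw [Real.cos_neg]

lemma angular (k : ℂ) (m : ℤ) (r₀ z₀ θ₀ r' z' : ℝ) :
    (∫ θ in (0:ℝ)..(2*Real.pi),
        Complex.exp (Complex.I * k * (Rcyl r₀ z₀ r' z' (θ - θ₀) : ℂ)) /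
            (4 * (Real.pi : ℂ) * (Rcyl r₀ z₀ r' z' (θ - θ₀) : ℂ)) *
          Complex.exp (Complex.I * (m : ℂ) * (θ : ℂ)))
      = Complex.exp (Complex.I * (m : ℂ) * (θ₀ : ℂ)) * (2 * (Real.pi : ℂ) * Gm k m r₀ z₀ r' z') := by
  set F : ℝ → ℂ := fun φ =>
    Complex.exp (Complex.I * k * (Rcyl r₀ z₀ r' z' φ : ℂ)) /
        (4 * (Real.pi : ℂ) * (Rcyl r₀ z₀ r' z' φ : ℂ)) *
      Complex.exp (-Complex.I * (m : ℂ) * (φ : ℂ)) with hF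
  have hper : Function.Periodic F (2 * Real.pi) := by
    intro φ
    have hR : Rcyl r₀ z₀ r' z' (φ + 2 * Real.pi) = Rcyl r₀ z₀ r' z' φ := by
      unfold Rcyl; rw [Real.cos_add_two_pi]
    simp only [hF, hR]
    congr 1
    have : (-Complex.I * (m : ℂ) * ((φ + 2 * Real.pi : ℝ) : ℂ))
        = -Complex.I * (m : ℂ) * (φ : ℂ) + ((-m : ℤ) : ℂ) * (2 * (Real.pi : ℂ) * Complex.I) := by
      push_cast; ring
    rw [this, Complex.exp_add, Complex.exp_int_mul_two_pi_mul_I, mul_one]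
  have step1 : ∀ θ : ℝ,
      Complex.exp (Complex.I * k * (Rcyl r₀ z₀ r' z' (θ - θ₀) : ℂ)) /
          (4 * (Real.pi : ℂ) * (Rcyl r₀ z₀ r' z' (θ - θ₀) : ℂ)) *
        Complex.exp (Complex.I * (m : ℂ) * (θ : ℂ))
        = Complex.exp (Complex.I * (m : ℂ) * (θ₀ : ℂ)) * F (θ₀ - θ) := by
    intro θ
    have hR : Rcyl r₀ z₀ r' z' (θ₀ - θ) = Rcyl r₀ z₀ r' z' (θ - θ₀) := by
      rw [← rcyl_even]; ring_nf
    simp only [hF, hR]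
    rw [show Complex.exp (Complex.I * (m:ℂ) * (θ:ℂ))
        = Complex.exp (-Complex.I * (m:ℂ) * ((θ₀ - θ : ℝ):ℂ)) *
          Complex.exp (Complex.I * (m:ℂ) * (θ₀:ℂ)) from by
      rw [← Complex.exp_add]; congr 1; push_cast; ring]
    ring
  rw [intervalIntegral.integral_congr (g := fun θ =>
      Complex.exp (Complex.I * (m : ℂ) * (θ₀ : ℂ)) * F (θ₀ - θ)) (fun θ _ => step1 θ)]
  rw [intervalIntegral.integral_const_mul]
  congr 1
  rw [intervalIntegral.integral_comp_sub_left F θ₀]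
  have h1 : (∫ x in θ₀ - 2 * Real.pi..θ₀ - 0, F x) = ∫ x in (0:ℝ)..(2*Real.pi), F x := by
    have := hper.intervalIntegral_add_eq (θ₀ - 2 * Real.pi) 0
    simpa using this
  rw [h1]
  unfold Gm
  rw [← mul_assoc]
  rw [mul_one_div, div_self (mul_ne_zero two_ne_zero (Complex.ofReal_ne_zero.mpr Real.pi_ne_zero)),
    one_mul]

/-- Separation of variables on a surface of revolution: the double integral of the
Green's function against a single azimuthal mode separates into `2π e^{imθ₀}` times a
line integral of the modal Green's function along the generating curve. -/
theorem statement14 (k : ℂ) (m : ℤ) (L : ℝ) (hL : 0 < L)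
    (r z : ℝ → ℝ) (u : ℝ → ℂ)
    (hr : ContinuousOn r (Set.Icc 0 L)) (hz : ContinuousOn z (Set.Icc 0 L))
    (hu : ContinuousOn u (Set.Icc 0 L))
    (hrpos : ∀ s ∈ Set.Icc (0 : ℝ) L, 0 ≤ r s)
    (r₀ θ₀ z₀ : ℝ) (hr₀ : 0 ≤ r₀)
    (hne : ∀ s ∈ Set.Icc (0 : ℝ) L, (r₀, z₀) ≠ (r s, z s)) :
    (∫ θ in (0 : ℝ)..(2 * Real.pi), ∫ s in (0 : ℝ)..L,
        G k ![r₀ * Real.cos θ₀, r₀ * Real.sin θ₀, z₀]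
            ![r s * Real.cos θ, r s * Real.sin θ, z s] *
          u s * Complex.exp (Complex.I * (m : ℂ) * (θ : ℂ)) * (r s : ℂ)) =
      2 * (Real.pi : ℂ) * Complex.exp (Complex.I * (m : ℂ) * (θ₀ : ℂ)) *
        ∫ s in (0 : ℝ)..L, Gm k m r₀ z₀ (r s) (z s) * u s * (r s : ℂ) := by
  have h2pi : (0:ℝ) ≤ 2 * Real.pi := by positivity
  have hL' : (0:ℝ) ≤ L := hL.le
  set g : ℝ → ℝ → ℂ := fun θ s =>
    Complex.exp (Complex.I * k * (Rcyl r₀ z₀ (r s) (z s) (θ - θ₀) : ℂ)) /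
        (4 * (Real.pi : ℂ) * (Rcyl r₀ z₀ (r s) (z s) (θ - θ₀) : ℂ)) *
      u s * Complex.exp (Complex.I * (m : ℂ) * (θ : ℂ)) * (r s : ℂ) with hg
  set S := Set.Icc 0 (2*Real.pi) ×ˢ Set.Icc (0:ℝ) L with hS
  -- the integrand equals g
  have hGg : ∀ θ s : ℝ,
      G k ![r₀ * Real.cos θ₀, r₀ * Real.sin θ₀, z₀]
          ![r s * Real.cos θ, r s * Real.sin θ, z s] *
        u s * Complex.exp (Complex.I * (m : ℂ) * (θ : ℂ)) * (r s : ℂ) = g θ s := by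
    intro θ s
    simp only [hg, G, enorm3_eq]
  -- continuity of g on S
  have hRne : ∀ p ∈ S, Rcyl r₀ z₀ (r p.2) (z p.2) (p.1 - θ₀) ≠ 0 := by
    intro p hp
    exact (rcyl_pos r₀ z₀ (r p.2) (z p.2) (p.1 - θ₀) hr₀ (hrpos p.2 hp.2) (hne p.2 hp.2)).ne'
  have hcont : ContinuousOn (fun p : ℝ × ℝ => g p.1 p.2) S := by
    have hmaps : ∀ p ∈ S, p.2 ∈ Set.Icc (0:ℝ) L := fun p hp => hp.2
    have hrc : ContinuousOn (fun p : ℝ × ℝ => r p.2) S :=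
      hr.comp continuous_snd.continuousOn hmaps
    have hzc : ContinuousOn (fun p : ℝ × ℝ => z p.2) S :=
      hz.comp continuous_snd.continuousOn hmaps
    have huc : ContinuousOn (fun p : ℝ × ℝ => u p.2) S :=
      hu.comp continuous_snd.continuousOn hmaps
    have hcos : ContinuousOn (fun p : ℝ × ℝ => Real.cos (p.1 - θ₀)) S :=
      (Real.continuous_cos.comp (continuous_fst.sub continuous_const)).continuousOn
    have hRc : ContinuousOn (fun p : ℝ × ℝ => Rcyl r₀ z₀ (r p.2) (z p.2) (p.1 - θ₀)) S := by
      unfold Rcyl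
      exact Real.continuous_sqrt.comp_continuousOn
        (((continuousOn_const.add (hrc.pow 2)).sub
          (((continuousOn_const.mul hrc).mul hcos))).add
          ((continuousOn_const.sub hzc).pow 2))
    have hRcc : ContinuousOn (fun p : ℝ × ℝ =>
        ((Rcyl r₀ z₀ (r p.2) (z p.2) (p.1 - θ₀) : ℝ) : ℂ)) S :=
      Complex.continuous_ofReal.comp_continuousOn hRc
    refine (((?_ : ContinuousOn _ S).mul huc).mul
        ((Complex.continuous_exp.comp
          (continuous_const.mul (Complex.continuous_ofReal.comp continuous_fst))).continuousOn)).mul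
        (Complex.continuous_ofReal.comp_continuousOn hrc)
    refine ContinuousOn.div
      (Complex.continuous_exp.comp_continuousOn (continuousOn_const.mul hRcc))
      (continuousOn_const.mul hRcc) ?_
    intro p hp
    refine mul_ne_zero ?_ (Complex.ofReal_ne_zero.mpr (hRne p hp))
    norm_num [Real.pi_ne_zero]
  -- integrability on the product
  have hint : IntegrableOn (fun p : ℝ × ℝ => g p.1 p.2)
      (Set.Ioc 0 (2*Real.pi) ×ˢ Set.Ioc (0:ℝ) L) volume :=
    (hcont.integrableOn_compact (isCompact_Icc.prod isCompact_Icc)).mono_set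
      (Set.prod_mono Set.Ioc_subset_Icc_self Set.Ioc_subset_Icc_self)
  -- rewrite the LHS with g and swap the order of integration
  have hswap :
      (∫ θ in (0:ℝ)..(2*Real.pi), ∫ s in (0:ℝ)..L, g θ s)
        = ∫ s in Set.Ioc (0:ℝ) L, ∫ θ in Set.Ioc (0:ℝ) (2*Real.pi), g θ s := by
    rw [intervalIntegral.integral_of_le h2pi]
    rw [show (fun θ => ∫ s in (0:ℝ)..L, g θ s)
        = fun θ => ∫ s in Set.Ioc (0:ℝ) L, g θ s from
      funext fun θ => intervalIntegral.integral_of_le hL']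
    apply MeasureTheory.integral_integral_swap
    rw [Measure.prod_restrict]
    exact hint
  calc
    (∫ θ in (0:ℝ)..(2*Real.pi), ∫ s in (0:ℝ)..L,
        G k ![r₀ * Real.cos θ₀, r₀ * Real.sin θ₀, z₀]
            ![r s * Real.cos θ, r s * Real.sin θ, z s] *
          u s * Complex.exp (Complex.I * (m : ℂ) * (θ : ℂ)) * (r s : ℂ))
      = ∫ θ in (0:ℝ)..(2*Real.pi), ∫ s in (0:ℝ)..L, g θ s := by
        simp only [hGg]
    _ = ∫ s in Set.Ioc (0:ℝ) L, ∫ θ in Set.Ioc (0:ℝ) (2*Real.pi), g θ s := hswap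
    _ = ∫ s in Set.Ioc (0:ℝ) L,
          2 * (Real.pi : ℂ) * Complex.exp (Complex.I * (m : ℂ) * (θ₀ : ℂ)) *
            (Gm k m r₀ z₀ (r s) (z s) * u s * (r s : ℂ)) := by
        apply MeasureTheory.integral_congr_ae
        filter_upwards [] with s
        rw [← intervalIntegral.integral_of_le h2pi]
        have : ∀ θ : ℝ, g θ s =
            (Complex.exp (Complex.I * k * (Rcyl r₀ z₀ (r s) (z s) (θ - θ₀) : ℂ)) /
                (4 * (Real.pi : ℂ) * (Rcyl r₀ z₀ (r s) (z s) (θ - θ₀) : ℂ)) *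
              Complex.exp (Complex.I * (m : ℂ) * (θ : ℂ))) * (u s * (r s : ℂ)) := by
          intro θ; simp only [hg]; ring
        rw [intervalIntegral.integral_congr (fun θ _ => this θ),
          intervalIntegral.integral_mul_const, angular]
        ring
    _ = 2 * (Real.pi : ℂ) * Complex.exp (Complex.I * (m : ℂ) * (θ₀ : ℂ)) *
          ∫ s in (0:ℝ)..L, Gm k m r₀ z₀ (r s) (z s) * u s * (r s : ℂ) := by
        rw [intervalIntegral.integral_of_le hL', MeasureTheory.integral_const_mul]
end
end
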